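/- Let E, Q be C¹ and J, R, K, B, P continuous matrix functions on an interval I (with E, Q, J, R, K of size n×n and B, P of size n×m), let U : ℝ → Matrix (Fin n) (Fin n) ℝ be continuous with U(t) invertible for all t ∈ I, and let V : ℝ → Matrix (Fin n) (Fin n) ℝ be C¹ with V(t) invertible for all t ∈ I. Define Ẽ = Uᵀ*E*V, Q̃ = U⁻¹*Q*V, J̃ = Uᵀ*J*U, R̃ = Uᵀ*R*U, B̃ = Uᵀ*B, P̃ = Uᵀ*P, K̃ = V⁻¹*K*V + V⁻¹*V'. Let u : ℝ → ℝᵐ, let x : ℝ → ℝⁿ be C¹ satisfying E(t) ⬝ x'(t) = ((J(t)−R(t))*Q(t) − E(t)*K(t)) ⬝ x(t) + (B(t)−P(t)) ⬝ u(t) on I, and set x̃(t) = V(t)⁻¹ ⬝ x(t). Then x̃ is C¹ and satisfies the transformed state equation Ẽ(t) ⬝ x̃'(t) = ((J̃(t)−R̃(t))*Q̃(t) − Ẽ(t)*K̃(t)) ⬝ x̃(t) + (B̃(t)−P̃(t)) ⬝ u(t) for all t ∈ I; moreover the outputs agree, (B̃(t)+P̃(t))ᵀ*Q̃(t) ⬝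 x̃(t) = (B(t)+P(t))ᵀ*Q(t) ⬝ x(t), and the Hamiltonian is invariant: (1/2)⟪x̃(t), (Q̃(t)ᵀ*Ẽ(t)) ⬝ x̃(t)⟫ = (1/2)⟪x(t), (Q(t)ᵀ*E(t)) ⬝ x(t)⟫ for all t ∈ I. -/

import Mathlib

/-!
The transformed coefficients are congruences and similarities of the original ones, so in every
term the factors `U`, `U⁻¹` and `V`, `V⁻¹` cancel. The only new contribution comes from
differentiating `x̃ = V⁻¹ x`: the derivative `-V⁻¹ V' V⁻¹` of the inverse produces a term
`-Uᵀ E V' x̃`, which is exactly what the summand `V⁻¹ V'` of `K̃` accounts for.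
-/

open Matrix Set

/-- `M'` is the entrywise derivative of the matrix-valued function `M` at `t`. -/
def MatHasDerivAt {α β : Type*} (M M' : ℝ → Matrix α β ℝ) (t : ℝ) : Prop :=
  ∀ i j, HasDerivAt (fun s => M s i j) (M' t i j) t

section Differentiability

variable {𝕜 ι : Type*} [NontriviallyNormedField 𝕜] [Fintype ι] [DecidableEq ι]
  {A : 𝕜 → Matrix ι ι 𝕜} {t : 𝕜}

theorem differentiableAt_matrix_det (hA : ∀ i j, DifferentiableAt 𝕜 (fun s => A s i j) t) :
    DifferentiableAt 𝕜 (fun s => (A s).det) t := by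
  simp only [det_apply']
  exact .fun_sum fun σ _ => (DifferentiableAt.fun_finsetProd fun i _ => hA (σ i) i).const_mul _

theorem differentiableAt_matrix_adjugate
    (hA : ∀ i j, DifferentiableAt 𝕜 (fun s => A s i j) t) (i j : ι) :
    DifferentiableAt 𝕜 (fun s => (A s).adjugate i j) t := by
  simp only [adjugate_apply]
  refine differentiableAt_matrix_det fun a b => ?_
  simp only [updateRow_apply]
  split_ifs
  exacts [differentiableAt_const _, hA a b]

theorem differentiableAt_matrix_inv (hA : ∀ i j, DifferentiableAt 𝕜 (fun s => A s i j) t)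
    (hdet : (A t).det ≠ 0) (i j : ι) :
    DifferentiableAt 𝕜 (fun s => (A s)⁻¹ i j) t := by
  simp only [inv_def, Matrix.smul_apply, Ring.inverse_eq_inv', smul_eq_mul]
  exact ((differentiableAt_matrix_det hA).inv hdet).mul (differentiableAt_matrix_adjugate hA i j)

end Differentiability

theorem matHasDerivAt_const {ι κ : Type*} (C : Matrix ι κ ℝ) (t : ℝ) :
    MatHasDerivAt (fun _ => C) 0 t :=
  fun i j => hasDerivAt_const t (C i j)

namespace MatHasDerivAt

variable {ι κ ν : Type*} {A A' : ℝ → Matrix ι κ ℝ} {t : ℝ}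

theorem continuousAt (hA : MatHasDerivAt A A' t) : ContinuousAt A t :=
  continuousAt_pi.2 fun i => continuousAt_pi.2 fun j => (hA i j).continuousAt

theorem unique {A'' : ℝ → Matrix ι κ ℝ} (hA' : MatHasDerivAt A A' t)
    (hA'' : MatHasDerivAt A A'' t) : A' t = A'' t :=
  ext fun i j => (hA' i j).unique (hA'' i j)

theorem congr_of_eventuallyEq {B : ℝ → Matrix ι κ ℝ} (hA : MatHasDerivAt A A' t)
    (h : B =ᶠ[nhds t] A) : MatHasDerivAt B A' t :=
  fun i j => (hA i j).congr_of_eventuallyEq (h.mono fun _ hs => congrFun (congrFun hs i) j)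

theorem mul [Fintype κ] {B B' : ℝ → Matrix κ ν ℝ} (hA : MatHasDerivAt A A' t)
    (hB : MatHasDerivAt B B' t) :
    MatHasDerivAt (fun s => A s * B s) (fun s => A' s * B s + A s * B' s) t := by
  intro i j
  simpa only [mul_apply, Matrix.add_apply, ← Finset.sum_add_distrib] using
    HasDerivAt.fun_sum fun k _ => (hA i k).fun_mul (hB k j)

theorem hasDerivAt_mulVec [Fintype κ] {v : ℝ → κ → ℝ} {v' : κ → ℝ}
    (hA : MatHasDerivAt A A' t) (hv : HasDerivAt v v' t) :
    HasDerivAt (fun s => A s *ᵥ v s) (A' t *ᵥ v t + A t *ᵥ v') t := by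
  refine hasDerivAt_pi.2 fun i => ?_
  simpa only [mulVec, dotProduct, Pi.add_apply, ← Finset.sum_add_distrib] using
    HasDerivAt.fun_sum fun k _ => (hA i k).fun_mul (hasDerivAt_pi.1 hv k)

theorem inv [Fintype ι] [DecidableEq ι] {A A' : ℝ → Matrix ι ι ℝ} (hA : MatHasDerivAt A A' t)
    (hunit : IsUnit (A t)) :
    MatHasDerivAt (fun s => (A s)⁻¹) (fun s => -((A s)⁻¹ * A' s * (A s)⁻¹)) t := by
  have hdet : IsUnit (A t).det := (isUnit_iff_isUnit_det _).1 hunit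
  set D : Matrix ι ι ℝ := of fun i j => deriv (fun s => (A s)⁻¹ i j) t
  have hD : MatHasDerivAt (fun s => (A s)⁻¹) (fun _ => D) t := fun i j =>
    (differentiableAt_matrix_inv (fun a b => (hA a b).differentiableAt) hdet.ne_zero i j).hasDerivAt
  -- `A * A⁻¹` is constant near `t`, so its derivative `A' A⁻¹ + A D` vanishes.
  have hone : ∀ᶠ s in nhds t, A s * (A s)⁻¹ = 1 :=
    ((differentiableAt_matrix_det fun i j => (hA i j).differentiableAt).continuousAt.eventually_ne
      hdet.ne_zero).mono fun _ hs => mul_nonsing_inv _ (isUnit_iff_ne_zero.2 hs)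
  have hzero : A' t * (A t)⁻¹ + A t * D = 0 :=
    ((hA.mul hD).congr_of_eventuallyEq (hone.mono fun _ hs => hs.symm)).unique
      (matHasDerivAt_const 1 t)
  have hD_eq : D = -((A t)⁻¹ * A' t * (A t)⁻¹) := by
    rw [← nonsing_inv_mul_cancel_left (A := A t) D hdet, eq_neg_of_add_eq_zero_right hzero,
      Matrix.mul_neg, Matrix.mul_assoc]
  exact fun i j => by simpa only [hD_eq] using hD i j

end MatHasDerivAt

namespace PortHamiltonian

variable {α ι κ ν : Type*} [CommRing α] [Fintype ι] [DecidableEq ι] [Fintype ν]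
  {U : Matrix ι ι α}

theorem output_invariant (hU : IsUnit U) (B P : Matrix ι κ α) (Q : Matrix ι ι α)
    (V : Matrix ι ν α) (x : ν → α) :
    ((Uᵀ * B + Uᵀ * P)ᵀ * (U⁻¹ * Q * V)) *ᵥ x = ((B + P)ᵀ * Q) *ᵥ (V *ᵥ x) := by
  rw [← Matrix.mul_add, transpose_mul, transpose_transpose, mulVec_mulVec]
  simp only [Matrix.mul_assoc, mul_nonsing_inv_cancel_left U _ ((isUnit_iff_isUnit_det U).1 hU)]

theorem hamiltonian_invariant (hU : IsUnit U) (Q E : Matrix ι ι α) (V : Matrix ι ν α)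
    (x : ν → α) :
    x ⬝ᵥ ((U⁻¹ * Q * V)ᵀ * (Uᵀ * E * V)) *ᵥ x = (V *ᵥ x) ⬝ᵥ (Qᵀ * E) *ᵥ (V *ᵥ x) := by
  have hconj : (U⁻¹ * Q * V)ᵀ * (Uᵀ * E * V) = Vᵀ * (Qᵀ * E * V) := by
    simp only [transpose_mul, Matrix.mul_assoc]
    rw [← Matrix.mul_assoc (U⁻¹)ᵀ, ← transpose_mul,
      mul_nonsing_inv U ((isUnit_iff_isUnit_det U).1 hU), transpose_one, Matrix.one_mul]
  rw [hconj, ← mulVec_mulVec, dotProduct_mulVec, vecMul_transpose, ← mulVec_mulVec]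

theorem stateEquation_transform [Fintype κ] {V E Q J R K Vd : Matrix ι ι α} {B P : Matrix ι κ α}
    {x x' : ι → α} {u : κ → α} (hU : IsUnit U) (hV : IsUnit V)
    (hode : E *ᵥ x' = ((J - R) * Q - E * K) *ᵥ x + (B - P) *ᵥ u) :
    (Uᵀ * E * V) *ᵥ (-(V⁻¹ * Vd * V⁻¹) *ᵥ x + V⁻¹ *ᵥ x') =
      ((Uᵀ * J * U - Uᵀ * R * U) * (U⁻¹ * Q * V) - Uᵀ * E * V * (V⁻¹ * K * V + V⁻¹ * Vd)) *ᵥ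
        (V⁻¹ *ᵥ x) + (Uᵀ * B - Uᵀ * P) *ᵥ u := by
  have hUdet := (isUnit_iff_isUnit_det U).1 hU
  have hVdet := (isUnit_iff_isUnit_det V).1 hV
  have hlhs : (Uᵀ * E * V) * -(V⁻¹ * Vd * V⁻¹) = -(Uᵀ * E * Vd * V⁻¹) := by
    simp only [Matrix.mul_neg, Matrix.mul_assoc, mul_nonsing_inv_cancel_left V _ hVdet]
  have hrhs : ((Uᵀ * J * U - Uᵀ * R * U) * (U⁻¹ * Q * V) -
      Uᵀ * E * V * (V⁻¹ * K * V + V⁻¹ * Vd)) * V⁻¹ =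
      Uᵀ * ((J - R) * Q - E * K) - Uᵀ * E * Vd * V⁻¹ := by
    simp only [Matrix.sub_mul, Matrix.mul_sub, Matrix.mul_add, Matrix.add_mul, Matrix.mul_assoc,
      mul_nonsing_inv_cancel_left U _ hUdet, mul_nonsing_inv_cancel_left V _ hVdet,
      mul_nonsing_inv V hVdet, Matrix.mul_one]
    abel
  rw [mulVec_add, mulVec_mulVec, mulVec_mulVec, hlhs, mul_nonsing_inv_cancel_right V _ hVdet,
    mulVec_mulVec, hrhs, ← mulVec_mulVec x' Uᵀ E, hode, mulVec_add, mulVec_mulVec, mulVec_mulVec,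
    Matrix.mul_sub, Matrix.mul_sub]
  simp only [sub_mulVec, neg_mulVec]
  abel

end PortHamiltonian

theorem pHDAE_state_transformation_general
    (n m : ℕ) (I : Set ℝ)
    (E Q J R K : ℝ → Matrix (Fin n) (Fin n) ℝ)
    (B P : ℝ → Matrix (Fin n) (Fin m) ℝ)
    (U : ℝ → Matrix (Fin n) (Fin n) ℝ)
    (hU : ∀ t ∈ I, IsUnit (U t))
    (V Vd : ℝ → Matrix (Fin n) (Fin n) ℝ)
    (hV : ∀ t ∈ I, MatHasDerivAt V Vd t) (hVdc : ContinuousOn Vd I)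
    (hVinv : ∀ t ∈ I, IsUnit (V t))
    (tE tQ tJ tR tK : ℝ → Matrix (Fin n) (Fin n) ℝ)
    (tB tP : ℝ → Matrix (Fin n) (Fin m) ℝ)
    (htE : ∀ t, tE t = (U t)ᵀ * E t * V t)
    (htQ : ∀ t, tQ t = (U t)⁻¹ * Q t * V t)
    (htJ : ∀ t, tJ t = (U t)ᵀ * J t * U t)
    (htR : ∀ t, tR t = (U t)ᵀ * R t * U t)
    (htB : ∀ t, tB t = (U t)ᵀ * B t)
    (htP : ∀ t, tP t = (U t)ᵀ * P t)
    (htK : ∀ t, tK t = (V t)⁻¹ * K t * V t + (V t)⁻¹ * Vd t)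
    (u : ℝ → Fin m → ℝ)
    (x x' : ℝ → Fin n → ℝ)
    (hx : ∀ t ∈ I, HasDerivAt x (x' t) t) (hx'c : ContinuousOn x' I)
    (hode : ∀ t ∈ I, E t *ᵥ x' t =
      ((J t - R t) * Q t - E t * K t) *ᵥ x t + (B t - P t) *ᵥ u t) :
    (∃ xtd : ℝ → Fin n → ℝ,
      (∀ t ∈ I, HasDerivAt (fun s => (V s)⁻¹ *ᵥ x s) (xtd t) t) ∧
      ContinuousOn xtd I ∧
      (∀ t ∈ I, tE t *ᵥ xtd t =
        ((tJ t - tR t) * tQ t - tE t * tK t) *ᵥ ((V t)⁻¹ *ᵥ x t) +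
          (tB t - tP t) *ᵥ u t)) ∧
    (∀ t ∈ I, ((tB t + tP t)ᵀ * tQ t) *ᵥ ((V t)⁻¹ *ᵥ x t) =
      ((B t + P t)ᵀ * Q t) *ᵥ x t) ∧
    (∀ t ∈ I, (1 / 2 : ℝ) * (((V t)⁻¹ *ᵥ x t) ⬝ᵥ ((tQ t)ᵀ * tE t) *ᵥ ((V t)⁻¹ *ᵥ x t)) =
      (1 / 2 : ℝ) * (x t ⬝ᵥ ((Q t)ᵀ * E t) *ᵥ x t)) := by
  have hVinvd : ∀ t ∈ I,
      MatHasDerivAt (fun s => (V s)⁻¹) (fun s => -((V s)⁻¹ * Vd s * (V s)⁻¹)) t :=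
    fun t ht => (hV t ht).inv (hVinv t ht)
  have hVinvc : ContinuousOn (fun s => (V s)⁻¹) I :=
    fun t ht => (hVinvd t ht).continuousAt.continuousWithinAt
  have hxc : ContinuousOn x I := fun t ht => (hx t ht).continuousAt.continuousWithinAt
  have hVx : ∀ t ∈ I, V t *ᵥ ((V t)⁻¹ *ᵥ x t) = x t := fun t ht => by
    rw [mulVec_mulVec, mul_nonsing_inv _ ((isUnit_iff_isUnit_det _).1 (hVinv t ht)), one_mulVec]
  refine ⟨⟨fun t => -((V t)⁻¹ * Vd t * (V t)⁻¹) *ᵥ x t + (V t)⁻¹ *ᵥ x' t,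
    fun t ht => (hVinvd t ht).hasDerivAt_mulVec (hx t ht), by fun_prop, fun t ht => ?_⟩,
    fun t ht => ?_, fun t ht => ?_⟩
  · rw [htE, htJ, htR, htQ, htK, htB, htP]
    exact PortHamiltonian.stateEquation_transform (hU t ht) (hVinv t ht) (hode t ht)
  · rw [htB, htP, htQ, PortHamiltonian.output_invariant (hU t ht), hVx t ht]
  · rw [htQ, htE, PortHamiltonian.hamiltonian_invariant (hU t ht), hVx t ht]

/-- Under the change of basis `x = V x̃` together with a left scaling by `Uᵀ`, a
solution of a port-Hamiltonian descriptor system transforms into a solution of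
the transformed system, the outputs agree, and the Hamiltonian is invariant. -/
theorem pHDAE_state_transformation
    (n m : ℕ) (I : Set ℝ)
    (E Q J R K : ℝ → Matrix (Fin n) (Fin n) ℝ)
    (B P : ℝ → Matrix (Fin n) (Fin m) ℝ)
    (Ed Qd : ℝ → Matrix (Fin n) (Fin n) ℝ)
    (hE : ∀ t ∈ I, MatHasDerivAt E Ed t) (hEdc : ContinuousOn Ed I)
    (hQ : ∀ t ∈ I, MatHasDerivAt Q Qd t) (hQdc : ContinuousOn Qd I)
    (hJc : ContinuousOn J I) (hRc : ContinuousOn R I) (hKc : ContinuousOn K I)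
    (hBc : ContinuousOn B I) (hPc : ContinuousOn P I)
    (U : ℝ → Matrix (Fin n) (Fin n) ℝ)
    (hUc : ContinuousOn U I) (hU : ∀ t ∈ I, IsUnit (U t))
    (V Vd : ℝ → Matrix (Fin n) (Fin n) ℝ)
    (hV : ∀ t ∈ I, MatHasDerivAt V Vd t) (hVdc : ContinuousOn Vd I)
    (hVinv : ∀ t ∈ I, IsUnit (V t))
    (tE tQ tJ tR tK : ℝ → Matrix (Fin n) (Fin n) ℝ)
    (tB tP : ℝ → Matrix (Fin n) (Fin m) ℝ)
    (htE : ∀ t, tE t = (U t)ᵀ * E t * V t)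
    (htQ : ∀ t, tQ t = (U t)⁻¹ * Q t * V t)
    (htJ : ∀ t, tJ t = (U t)ᵀ * J t * U t)
    (htR : ∀ t, tR t = (U t)ᵀ * R t * U t)
    (htB : ∀ t, tB t = (U t)ᵀ * B t)
    (htP : ∀ t, tP t = (U t)ᵀ * P t)
    (htK : ∀ t, tK t = (V t)⁻¹ * K t * V t + (V t)⁻¹ * Vd t)
    (u : ℝ → Fin m → ℝ)
    (x x' : ℝ → Fin n → ℝ)
    (hx : ∀ t ∈ I, HasDerivAt x (x' t) t) (hx'c : ContinuousOn x' I)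
    (hode : ∀ t ∈ I, E t *ᵥ x' t =
      ((J t - R t) * Q t - E t * K t) *ᵥ x t + (B t - P t) *ᵥ u t) :
    (∃ xtd : ℝ → Fin n → ℝ,
      (∀ t ∈ I, HasDerivAt (fun s => (V s)⁻¹ *ᵥ x s) (xtd t) t) ∧
      ContinuousOn xtd I ∧
      (∀ t ∈ I, tE t *ᵥ xtd t =
        ((tJ t - tR t) * tQ t - tE t * tK t) *ᵥ ((V t)⁻¹ *ᵥ x t) +
          (tB t - tP t) *ᵥ u t)) ∧
    (∀ t ∈ I, ((tB t + tP t)ᵀ * tQ t) *ᵥ ((V t)⁻¹ *ᵥ x t) =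
      ((B t + P t)ᵀ * Q t) *ᵥ x t) ∧
    (∀ t ∈ I, (1 / 2 : ℝ) * (((V t)⁻¹ *ᵥ x t) ⬝ᵥ ((tQ t)ᵀ * tE t) *ᵥ ((V t)⁻¹ *ᵥ x t)) =
      (1 / 2 : ℝ) * (x t ⬝ᵥ ((Q t)ᵀ * E t) *ᵥ x t)) :=
  pHDAE_state_transformation_general n m I E Q J R K B P U hU V Vd hV hVdc hVinv tE tQ tJ tR tK tB
    tP htE htQ htJ htR htB htP htK u x x' hx hx'c hode
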